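/- arXiv:1905.04011 — 5 statements merged into one kernel-verified Lean document; each statement's English description precedes it below -/
import Mathlib

section
/- Let k = (k1,k2) ∈ ℝ² satisfy μ(k) = 0. Then |t1 + i·t2·exp(i k1)| = |i + t3·exp(i k1)|. Moreover, if i + t3·exp(i k1) ≠ 0, then exp(i k2) = (t1 + i·t2·exp(i k1)) / (i + t3·exp(i k1)); i.e., the zeros of μ lie at the intersection of the two circles in the complex plane traced by θ ↦ t1 + i·t2·exp(iθ) and θ ↦ i + t3·exp(iθ). -/
open Complex Real

/-- The characteristic polynomial of the non-interacting dimer model. -/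
noncomputable def mu (t1 t2 t3 : ℝ) (k : ℝ × ℝ) : ℂ :=
  (t1 : ℂ) + Complex.I * (t2 : ℂ) * Complex.exp (Complex.I * (k.1 : ℂ))
    - (t3 : ℂ) * Complex.exp (Complex.I * ((k.1 : ℂ) + (k.2 : ℂ)))
    - Complex.I * Complex.exp (Complex.I * (k.2 : ℂ))

theorem mu_eq_sub_mul_exp (t1 t2 t3 : ℝ) (k : ℝ × ℝ) :
    mu t1 t2 t3 k = ((t1 : ℂ) + I * t2 * exp (I * k.1))
      - (I + t3 * exp (I * k.1)) * exp (I * k.2) := by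
  rw [mu, mul_add, Complex.exp_add]
  ring

theorem zeros_of_mu_on_circles_general (t1 t2 t3 : ℝ)
    (k : ℝ × ℝ) (hk : mu t1 t2 t3 k = 0) :
    ‖(t1 : ℂ) + Complex.I * (t2 : ℂ) * Complex.exp (Complex.I * (k.1 : ℂ))‖
      = ‖Complex.I + (t3 : ℂ) * Complex.exp (Complex.I * (k.1 : ℂ))‖ ∧
    (Complex.I + (t3 : ℂ) * Complex.exp (Complex.I * (k.1 : ℂ)) ≠ 0 →
      Complex.exp (Complex.I * (k.2 : ℂ))
        = ((t1 : ℂ) + Complex.I * (t2 : ℂ) * Complex.exp (Complex.I * (k.1 : ℂ)))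
          / (Complex.I + (t3 : ℂ) * Complex.exp (Complex.I * (k.1 : ℂ)))) := by
  have key := sub_eq_zero.mp ((mu_eq_sub_mul_exp t1 t2 t3 k).symm.trans hk)
  refine ⟨?_, fun hB => (eq_div_iff hB).mpr (key.trans (mul_comm _ _)).symm⟩
  rw [key, norm_mul, norm_exp_I_mul_ofReal, mul_one]

/-- The zeros of `μ` lie on the intersection of the two circles
`θ ↦ t₁ + i t₂ e^{iθ}` and `θ ↦ i + t₃ e^{iθ}`. -/
theorem zeros_of_mu_on_circles (t1 t2 t3 : ℝ) (ht1 : 0 < t1) (ht2 : 0 < t2) (ht3 : 0 < t3)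
    (k : ℝ × ℝ) (hk : mu t1 t2 t3 k = 0) :
    ‖(t1 : ℂ) + Complex.I * (t2 : ℂ) * Complex.exp (Complex.I * (k.1 : ℂ))‖
      = ‖Complex.I + (t3 : ℂ) * Complex.exp (Complex.I * (k.1 : ℂ))‖ ∧
    (Complex.I + (t3 : ℂ) * Complex.exp (Complex.I * (k.1 : ℂ)) ≠ 0 →
      Complex.exp (Complex.I * (k.2 : ℂ))
        = ((t1 : ℂ) + Complex.I * (t2 : ℂ) * Complex.exp (Complex.I * (k.1 : ℂ)))
          / (Complex.I + (t3 : ℂ) * Complex.exp (Complex.I * (k.1 : ℂ)))) :=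
  zeros_of_mu_on_circles_general t1 t2 t3 k hk
end

section
/- Let t > 0 and take t1 = t3 = t, t2 = 1. Then for k = (k1,k2) ∈ ℝ², μ(k) = 0 if and only if k ∈ (0,0) + 2πℤ² or k ∈ (π,π) + 2πℤ². Moreover the partial derivatives at the zero p⁺ = (0,0) are ∂_{k1}μ(0,0) = −(1 + i t) and ∂_{k2}μ(0,0) = 1 − i t, and consequently Im(∂_{k1}μ(0,0) · ∂_{k2}μ(π,π)) = 2t ≠ 0, so both zeros are non-degenerate (the gradients at each zero are not real multiples of each other). -/
/-!
Put `a = exp (i k₁)` and `b = exp (i k₂)`. For `t₁ = t₃ = t`, `t₂ = 1` we get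
`μ = t (1 - a b) + i (a - b)`, and since `a`, `b` lie on the unit circle,
`μ - a b · conj μ = 2 t (1 - a b)`. So a zero forces `a b = 1`, hence `a = b` and `a² = 1`,
i.e. `a = b = ±1`. Two gradient components `z`, `w` are real multiples of each other only if
`Im (conj w · z) = 0`, which is `± 2 t` at both zeros.
-/

open Complex Real

open ComplexConjugate

lemma exp_I_mul_eq_one_iff (x : ℝ) : cexp (I * x) = 1 ↔ ∃ n : ℤ, x = 2 * π * n := by
  simp only [Complex.exp_eq_one_iff]
  refine exists_congr fun n => ⟨fun h => ?_, fun h => ?_⟩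
  · exact_mod_cast mul_left_cancel₀ I_ne_zero (h.trans (by ring) : I * x = I * (2 * π * n))
  · rw [h]; push_cast; ring

lemma exp_I_mul_eq_neg_one_iff (x : ℝ) : cexp (I * x) = -1 ↔ ∃ n : ℤ, x = π + 2 * π * n := by
  have h : cexp (I * ↑(x - π)) = -cexp (I * x) := by
    rw [ofReal_sub, mul_sub, Complex.exp_sub, mul_comm I ↑π, exp_pi_mul_I, div_neg, div_one]
  rw [← neg_eq_iff_eq_neg, ← h, exp_I_mul_eq_one_iff]
  simp only [sub_eq_iff_eq_add']

lemma exp_I_mul_pi : cexp (I * π) = -1 := by rw [mul_comm, exp_pi_mul_I]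

lemma eq_one_or_eq_neg_one_of_dimer_eq_zero {t : ℝ} (ht : t ≠ 0) {a b : ℂ} (ha : ‖a‖ = 1)
    (hb : ‖b‖ = 1) (h : t * (1 - a * b) + I * (a - b) = 0) :
    (a = 1 ∧ b = 1) ∨ (a = -1 ∧ b = -1) := by
  have ha' : a * conj a = 1 := by simp [mul_conj', ha]
  have hb' : b * conj b = 1 := by simp [mul_conj', hb]
  have hconj : t * (1 - conj a * conj b) - I * (conj a - conj b) = 0 := by
    simpa [conj_I, sub_eq_add_neg] using congrArg conj h
  have hab : a * b = 1 := by
    have : (2 * t : ℂ) * (1 - a * b) = 0 := by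
      linear_combination h - a * b * hconj + (-t * b * conj b - I * b) * ha' + (-t + I * a) * hb'
    exact (sub_eq_zero.mp ((mul_eq_zero.mp this).resolve_left (by simp [ht]))).symm
  obtain rfl : a = b := by simpa [hab, sub_eq_zero] using h
  have : (a - 1) * (a + 1) = 0 := by linear_combination hab
  rcases mul_eq_zero.mp this with h1 | h1
  · exact .inl ⟨by linear_combination h1, by linear_combination h1⟩
  · exact .inr ⟨by linear_combination h1, by linear_combination h1⟩

lemma mu_t_one_t_eq_zero_iff {t : ℝ} (ht : t ≠ 0) (k : ℝ × ℝ) :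
    mu t 1 t k = 0 ↔
      (∃ m n : ℤ, k = (2 * π * m, 2 * π * n)) ∨ (∃ m n : ℤ, k = (π + 2 * π * m, π + 2 * π * n)) := by
  obtain ⟨k1, k2⟩ := k
  have hmu : mu t 1 t (k1, k2) =
      t * (1 - cexp (I * k1) * cexp (I * k2)) + I * (cexp (I * k1) - cexp (I * k2)) := by
    rw [mu, mul_add, Complex.exp_add]; push_cast; ring
  simp only [Prod.mk.injEq, exists_and_left, exists_and_right, ← exp_I_mul_eq_one_iff,
    ← exp_I_mul_eq_neg_one_iff, hmu]
  constructor
  · exact eq_one_or_eq_neg_one_of_dimer_eq_zero ht (norm_exp_I_mul_ofReal k1)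
      (norm_exp_I_mul_ofReal k2)
  · rintro (⟨ha, hb⟩ | ⟨ha, hb⟩) <;> rw [ha, hb] <;> ring

lemma hasDerivAt_ofReal (x : ℝ) : HasDerivAt (fun x : ℝ => (x : ℂ)) 1 x := by
  simpa using (hasDerivAt_id x).ofReal_comp

lemma HasDerivAt.cexp_I_mul {f : ℝ → ℂ} {x : ℝ} (hf : HasDerivAt f 1 x) :
    HasDerivAt (fun x => cexp (I * f x)) (I * cexp (I * f x)) x := by
  simpa [mul_comm] using (hf.const_mul I).cexp

lemma hasDerivAt_mu_fst (t1 t2 t3 x y : ℝ) :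
    HasDerivAt (fun x : ℝ => mu t1 t2 t3 (x, y))
      (-(t2 * cexp (I * x)) - I * t3 * cexp (I * (x + y))) x := by
  have h1 := (hasDerivAt_ofReal x).cexp_I_mul
  have h2 := ((hasDerivAt_ofReal x).add_const (y : ℂ)).cexp_I_mul
  have := (((h1.const_mul (I * t2)).const_add (t1 : ℂ)).sub (h2.const_mul (t3 : ℂ))).sub_const
    (I * cexp (I * y))
  exact this.congr_deriv (by linear_combination (t2 * cexp (I * x)) * I_sq)

lemma hasDerivAt_mu_snd (t1 t2 t3 x y : ℝ) :
    HasDerivAt (fun y : ℝ => mu t1 t2 t3 (x, y))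
      (-(I * t3 * cexp (I * (x + y))) + cexp (I * y)) y := by
  have h1 := (hasDerivAt_ofReal y).cexp_I_mul
  have h2 := ((hasDerivAt_ofReal y).const_add (x : ℂ)).cexp_I_mul
  have := ((h2.const_mul (t3 : ℂ)).const_sub ((t1 : ℂ) + I * t2 * cexp (I * x))).sub
    (h1.const_mul I)
  exact this.congr_deriv (by linear_combination -cexp (I * y) * I_sq)

lemma exp_I_mul_pi_add_pi : cexp (I * (π + π)) = 1 := by
  rw [mul_add, Complex.exp_add, exp_I_mul_pi]; norm_num

lemma ne_ofReal_mul_of_im_conj_mul_ne_zero {z w : ℂ} (h : (conj w * z).im ≠ 0) (c : ℝ) :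
    z ≠ c * w := by
  rintro rfl
  apply h
  rw [mul_left_comm, mul_comm (conj w), mul_conj]
  simp

/-- For `t₁ = t₃ = t`, `t₂ = 1`: the zeros of `μ` are exactly `(0,0)` and `(π,π)` mod `2π`,
the gradients at the zeros are as computed, `Im(α₊ β₋) = 2t ≠ 0`, and at each zero the two
components of the gradient are not real multiples of each other (non-degeneracy). -/
theorem mu_zeros_special_case (t : ℝ) (ht : 0 < t) :
    (∀ k : ℝ × ℝ, mu t 1 t k = 0 ↔
      ((∃ m n : ℤ, k = (2 * π * m, 2 * π * n)) ∨
       (∃ m n : ℤ, k = (π + 2 * π * m, π + 2 * π * n)))) ∧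
    deriv (fun x : ℝ => mu t 1 t (x, 0)) 0 = -(1 + Complex.I * t) ∧
    deriv (fun y : ℝ => mu t 1 t (0, y)) 0 = 1 - Complex.I * t ∧
    (deriv (fun x : ℝ => mu t 1 t (x, 0)) 0
      * deriv (fun y : ℝ => mu t 1 t (π, y)) π).im = 2 * t ∧
    2 * t ≠ 0 ∧
    (∀ c : ℝ, deriv (fun y : ℝ => mu t 1 t (0, y)) 0
        ≠ (c : ℂ) * deriv (fun x : ℝ => mu t 1 t (x, 0)) 0) ∧
    (∀ c : ℝ, deriv (fun y : ℝ => mu t 1 t (π, y)) π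
        ≠ (c : ℂ) * deriv (fun x : ℝ => mu t 1 t (x, π)) π) := by
  have fst_zero : deriv (fun x : ℝ => mu t 1 t (x, 0)) 0 = -(1 + I * t) := by
    rw [(hasDerivAt_mu_fst t 1 t 0 0).deriv]
    simp only [ofReal_one, ofReal_zero, mul_zero, add_zero, Complex.exp_zero]; ring
  have snd_zero : deriv (fun y : ℝ => mu t 1 t (0, y)) 0 = 1 - I * t := by
    rw [(hasDerivAt_mu_snd t 1 t 0 0).deriv]
    simp only [ofReal_zero, mul_zero, add_zero, Complex.exp_zero]; ring
  have fst_pi : deriv (fun x : ℝ => mu t 1 t (x, π)) π = 1 - I * t := by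
    rw [(hasDerivAt_mu_fst t 1 t π π).deriv, exp_I_mul_pi, exp_I_mul_pi_add_pi, ofReal_one]; ring
  have snd_pi : deriv (fun y : ℝ => mu t 1 t (π, y)) π = -(1 + I * t) := by
    rw [(hasDerivAt_mu_snd t 1 t π π).deriv, exp_I_mul_pi, exp_I_mul_pi_add_pi]; ring
  refine ⟨mu_t_one_t_eq_zero_iff ht.ne', fst_zero, snd_zero, ?_, by positivity, fun c => ?_, fun c => ?_⟩
  · rw [fst_zero, snd_pi]; simp [mul_im, two_mul]
  · rw [snd_zero, fst_zero]
    exact ne_ofReal_mul_of_im_conj_mul_ne_zero (by simp [mul_im, ht.ne']) c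
  · rw [snd_pi, fst_pi]
    exact ne_ofReal_mul_of_im_conj_mul_ne_zero (by simp [mul_im, ht.ne']) c
end

section
/- Assume that k ↦ 1/μ(k) is Lebesgue integrable on [−π,π]². Then the Fourier coefficients g_a := (2π)^{−2} ∫_{[−π,π]²} exp(i(k1·a1 + k2·a2)) / μ(k) dk satisfy: g_{(0,0)} and g_{(1,1)} are real numbers, while g_{(1,0)} and g_{(0,1)} are purely imaginary numbers. -/
open Complex Real MeasureTheory

/-- The Fourier coefficient `g_a = (2π)⁻² ∫_{[−π,π]²} e^{i k·a}/μ(k) dk`. -/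
noncomputable def gcoef (t1 t2 t3 : ℝ) (a : ℤ × ℤ) : ℂ :=
  (((2 * π) ^ 2 : ℝ) : ℂ)⁻¹ *
    ∫ k in Set.Icc (-π) π ×ˢ Set.Icc (-π) π,
      Complex.exp (Complex.I * ((k.1 : ℂ) * (a.1 : ℂ) + (k.2 : ℂ) * (a.2 : ℂ)))
        / mu t1 t2 t3 k

/-!
Complex conjugation of `μ` is the reflection `k ↦ (π, π) - k`: `conj μ(k) = μ(π - k₁, π - k₂)`.
The integrand of `g_a` is `2π`-periodic in each variable, so this reflection preserves its
integral over `[-π, π]²`, while it turns `e^{i a·k}` into `(-1)^{a₁+a₂} conj e^{i a·k}`. Hence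
`g_a = (-1)^{a₁+a₂} conj g_a`.
-/

open Function intervalIntegral Set
open scoped ComplexConjugate

section Reflection

variable {E : Type*} [NormedAddCommGroup E] [NormedSpace ℝ E]

theorem Function.Periodic.intervalIntegral_comp_sub_left {g : ℝ → E} {a b : ℝ}
    (hg : Periodic g (b - a)) (c : ℝ) :
    ∫ x in a..b, g (c - x) = ∫ x in a..b, g x := by
  have := hg.intervalIntegral_add_eq (c - b) a
  rwa [add_sub_cancel, sub_add_sub_cancel, ← integral_comp_sub_left] at this

theorem intervalIntegral_intervalIntegral_comp_sub_sub {f : ℝ → ℝ → E} {a b : ℝ}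
    (hf₁ : ∀ y, Periodic (f · y) (b - a)) (hf₂ : ∀ x, Periodic (f x) (b - a)) (c d : ℝ) :
    ∫ x in a..b, ∫ y in a..b, f (c - x) (d - y) = ∫ x in a..b, ∫ y in a..b, f x y := by
  have houter : Periodic (fun x => ∫ y in a..b, f x y) (b - a) := fun x =>
    integral_congr fun y _ => hf₁ y x
  simp_rw [(hf₂ _).intervalIntegral_comp_sub_left d]
  exact houter.intervalIntegral_comp_sub_left c

theorem setIntegral_Icc_prod_Icc_eq_intervalIntegral [CompleteSpace E] {f : ℝ × ℝ → E}
    {a b c d : ℝ} (hab : a ≤ b) (hcd : c ≤ d) (hf : IntegrableOn f (Icc a b ×ˢ Icc c d)) :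
    ∫ k in Icc a b ×ˢ Icc c d, f k = ∫ x in a..b, ∫ y in c..d, f (x, y) := by
  rw [Measure.volume_eq_prod] at hf ⊢
  simp only [setIntegral_prod f hf, integral_Icc_eq_integral_Ioc, integral_of_le hab,
    integral_of_le hcd]

end Reflection

theorem Complex.exp_I_mul_add_two_pi (z : ℂ) : exp (I * (z + 2 * π)) = exp (I * z) := by
  rw [mul_add, exp_add, mul_comm I (2 * π), exp_two_pi_mul_I, mul_one]

theorem Complex.exp_I_mul_pi_sub (x : ℝ) : exp (I * ↑(π - x)) = -conj (exp (I * x)) := by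
  rw [← exp_conj, map_mul, conj_I, conj_ofReal, ofReal_sub, mul_sub, exp_sub, mul_comm I,
    exp_pi_mul_I, neg_mul, exp_neg, div_eq_mul_inv, neg_one_mul]

section Dimer

variable (t1 t2 t3 : ℝ)

theorem mu_add_two_pi_left (x y : ℝ) : mu t1 t2 t3 (x + 2 * π, y) = mu t1 t2 t3 (x, y) := by
  simp only [mu]
  push_cast
  rw [exp_I_mul_add_two_pi, add_right_comm, exp_I_mul_add_two_pi]

theorem mu_add_two_pi_right (x y : ℝ) : mu t1 t2 t3 (x, y + 2 * π) = mu t1 t2 t3 (x, y) := by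
  simp only [mu]
  push_cast
  rw [exp_I_mul_add_two_pi, ← add_assoc, exp_I_mul_add_two_pi]

theorem conj_mu (x y : ℝ) : conj (mu t1 t2 t3 (x, y)) = mu t1 t2 t3 (π - x, π - y) := by
  simp only [mu, mul_add I, Complex.exp_add, exp_I_mul_pi_sub, map_add, map_sub, map_mul, conj_I,
    conj_ofReal]
  ring

noncomputable def gcoefIntegrand (a : ℤ × ℤ) (x y : ℝ) : ℂ :=
  exp (I * ((x : ℂ) * (a.1 : ℂ) + (y : ℂ) * (a.2 : ℂ))) / mu t1 t2 t3 (x, y)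

theorem gcoefIntegrand_periodic_left (a : ℤ × ℤ) (y : ℝ) :
    Periodic (gcoefIntegrand t1 t2 t3 a · y) (2 * π) := fun x => by
  simp only [gcoefIntegrand, mu_add_two_pi_left]
  congr 1
  convert exp_periodic.int_mul a.1 _ using 2
  push_cast
  ring

theorem gcoefIntegrand_periodic_right (a : ℤ × ℤ) (x : ℝ) :
    Periodic (gcoefIntegrand t1 t2 t3 a x) (2 * π) := fun y => by
  simp only [gcoefIntegrand, mu_add_two_pi_right]
  congr 1
  convert exp_periodic.int_mul a.2 _ using 2
  push_cast
  ring

theorem gcoefIntegrand_pi_sub (a : ℤ × ℤ) (x y : ℝ) :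
    gcoefIntegrand t1 t2 t3 a (π - x) (π - y) =
      (-1) ^ (a.1 + a.2) * conj (gcoefIntegrand t1 t2 t3 a x y) := by
  rw [gcoefIntegrand, gcoefIntegrand, ← conj_mu, map_div₀, ← exp_conj, mul_div_assoc']
  congr 1
  rw [← exp_pi_mul_I, ← exp_int_mul, ← Complex.exp_add]
  congr 1
  simp only [map_mul, map_add, conj_I, conj_ofReal, map_intCast]
  push_cast
  ring

theorem integrableOn_gcoefIntegrand
    (hint : IntegrableOn (fun k : ℝ × ℝ => (mu t1 t2 t3 k)⁻¹) (Icc (-π) π ×ˢ Icc (-π) π))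
    (a : ℤ × ℤ) :
    IntegrableOn (fun k : ℝ × ℝ => gcoefIntegrand t1 t2 t3 a k.1 k.2)
      (Icc (-π) π ×ˢ Icc (-π) π) := by
  simp only [gcoefIntegrand, div_eq_mul_inv]
  refine hint.bdd_mul (c := 1) (by fun_prop) (.of_forall fun k => ?_)
  rw [norm_exp]
  simp

theorem gcoef_eq_intervalIntegral
    (hint : IntegrableOn (fun k : ℝ × ℝ => (mu t1 t2 t3 k)⁻¹) (Icc (-π) π ×ˢ Icc (-π) π))
    (a : ℤ × ℤ) :
    gcoef t1 t2 t3 a =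
      (((2 * π) ^ 2 : ℝ) : ℂ)⁻¹ * ∫ x in -π..π, ∫ y in -π..π, gcoefIntegrand t1 t2 t3 a x y := by
  have hπ : -π ≤ π := by linarith [pi_pos]
  rw [← setIntegral_Icc_prod_Icc_eq_intervalIntegral hπ hπ
    (integrableOn_gcoefIntegrand t1 t2 t3 hint a)]
  rfl

theorem gcoef_eq_neg_one_zpow_mul_conj
    (hint : IntegrableOn (fun k : ℝ × ℝ => (mu t1 t2 t3 k)⁻¹) (Icc (-π) π ×ˢ Icc (-π) π))
    (a : ℤ × ℤ) :
    gcoef t1 t2 t3 a = (-1) ^ (a.1 + a.2) * conj (gcoef t1 t2 t3 a) := by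
  have hperiod : π - -π = 2 * π := by ring
  rw [gcoef_eq_intervalIntegral t1 t2 t3 hint]
  conv_lhs => rw [← intervalIntegral_intervalIntegral_comp_sub_sub
    (fun y => hperiod ▸ gcoefIntegrand_periodic_left t1 t2 t3 a y)
    (fun x => hperiod ▸ gcoefIntegrand_periodic_right t1 t2 t3 a x) π π]
  simp only [gcoefIntegrand_pi_sub, intervalIntegral.integral_const_mul, intervalIntegral_conj,
    map_mul, map_inv₀, conj_ofReal]
  ring

end Dimer

theorem gcoef_real_imaginary_general (t1 t2 t3 : ℝ)
    (hint : IntegrableOn (fun k : ℝ × ℝ => (mu t1 t2 t3 k)⁻¹)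
      (Set.Icc (-π) π ×ˢ Set.Icc (-π) π)) :
    (gcoef t1 t2 t3 (0, 0)).im = 0 ∧ (gcoef t1 t2 t3 (1, 1)).im = 0 ∧
    (gcoef t1 t2 t3 (1, 0)).re = 0 ∧ (gcoef t1 t2 t3 (0, 1)).re = 0 := by
  have h := gcoef_eq_neg_one_zpow_mul_conj t1 t2 t3 hint
  refine ⟨?_, ?_, ?_, ?_⟩
  · simpa [self_eq_neg] using congrArg im (h (0, 0))
  · simpa [self_eq_neg] using congrArg im (h (1, 1))
  · simpa [self_eq_neg] using congrArg re (h (1, 0))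
  · simpa [self_eq_neg] using congrArg re (h (0, 1))

/-- `g_{(0,0)}` and `g_{(1,1)}` are real, while `g_{(1,0)}` and `g_{(0,1)}` are purely
imaginary. -/
theorem gcoef_real_imaginary (t1 t2 t3 : ℝ) (ht1 : 0 < t1) (ht2 : 0 < t2) (ht3 : 0 < t3)
    (hint : IntegrableOn (fun k : ℝ × ℝ => (mu t1 t2 t3 k)⁻¹)
      (Set.Icc (-π) π ×ˢ Set.Icc (-π) π)) :
    (gcoef t1 t2 t3 (0, 0)).im = 0 ∧ (gcoef t1 t2 t3 (1, 1)).im = 0 ∧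
    (gcoef t1 t2 t3 (1, 0)).re = 0 ∧ (gcoef t1 t2 t3 (0, 1)).re = 0 :=
  gcoef_real_imaginary_general t1 t2 t3 hint
end

section
/- Assume that k ↦ 1/μ(k) is Lebesgue integrable on [−π,π]², and define W : ℝ² → ℂ by W(k1,k2) = g_{(0,0)}·exp(i(k1+k2)) − g_{(1,0)}·exp(i k2) − g_{(0,1)}·exp(i k1) + g_{(1,1)}. Then for every p = (p1,p2) ∈ ℝ², conj(W(p1,p2)) = W(π−p1, π−p2). In particular, if p⁺ is a zero of μ and p⁻ = (π,π) − p⁺, then conj(W(p⁺)) = W(p⁻). -/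
open Complex Real MeasureTheory ComplexConjugate

/-- `W(k) = g_{(0,0)} e^{i(k₁+k₂)} − g_{(1,0)} e^{i k₂} − g_{(0,1)} e^{i k₁} + g_{(1,1)}`. -/
noncomputable def Wfun (t1 t2 t3 : ℝ) (k : ℝ × ℝ) : ℂ :=
  gcoef t1 t2 t3 (0, 0) * Complex.exp (Complex.I * ((k.1 : ℂ) + (k.2 : ℂ)))
    - gcoef t1 t2 t3 (1, 0) * Complex.exp (Complex.I * (k.2 : ℂ))
    - gcoef t1 t2 t3 (0, 1) * Complex.exp (Complex.I * (k.1 : ℂ))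
    + gcoef t1 t2 t3 (1, 1)

/-!
Both `μ` and the integrand of `g_a` are functions of `z = e^{ik₁}` and `w = e^{ik₂}`. Since
`e^{i(π - x)} = -conj e^{ix}`, the reflection `k ↦ (π, π) - k` acts as `(z, w) ↦ (-z̄, -w̄)`, which
turns `μ` into `conj μ` and `z^{a₁} w^{a₂}` into `(-1)^{a₁+a₂} conj (z^{a₁} w^{a₂})`. The reflection
maps `[-π, π]²` onto `[0, 2π]²`; both boxes are fundamental domains of the lattice `2πℤ²`, so a
doubly `2π`-periodic function has the same integral over them. Hence `conj g_a = (-1)^{a₁+a₂} g_a`,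
and the symmetry of `W` follows by expanding.
-/

open Set Function

section PeriodicIntegral

variable {T : ℝ} {E : Type*} [NormedAddCommGroup E] [NormedSpace ℝ E]

def squareLattice (T : ℝ) : AddSubgroup (ℝ × ℝ) :=
  (AddSubgroup.zmultiples T).prod (AddSubgroup.zmultiples T)

instance : Countable (squareLattice T) :=
  Countable.of_equiv _ (AddSubgroup.prodEquiv _ _).symm.toEquiv

lemma mem_squareLattice {g : ℝ × ℝ} : g ∈ squareLattice T ↔ ∃ m n : ℤ, g = (m • T, n • T) := by
  simp only [squareLattice, AddSubgroup.mem_prod, AddSubgroup.mem_zmultiples_iff]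
  constructor
  · rintro ⟨⟨m, hm⟩, n, hn⟩
    exact ⟨m, n, Prod.ext hm.symm hn.symm⟩
  · rintro ⟨m, n, rfl⟩
    exact ⟨⟨m, rfl⟩, n, rfl⟩

theorem isAddFundamentalDomain_Ioc_prod_Ioc (hT : 0 < T) (a b : ℝ) :
    IsAddFundamentalDomain (squareLattice T) (Ioc a (a + T) ×ˢ Ioc b (b + T)) := by
  refine IsAddFundamentalDomain.mk' (nullMeasurableSet_Ioc.prod nullMeasurableSet_Ioc) fun x => ?_
  obtain ⟨m, hm, hm_unique⟩ := existsUnique_add_zsmul_mem_Ioc hT x.1 a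
  obtain ⟨n, hn, hn_unique⟩ := existsUnique_add_zsmul_mem_Ioc hT x.2 b
  refine ⟨⟨(m • T, n • T), mem_squareLattice.2 ⟨m, n, rfl⟩⟩, ?_, ?_⟩
  · simpa [AddSubgroup.vadd_def, add_comm] using And.intro hm hn
  · rintro ⟨g, hg⟩ hgx
    obtain ⟨m', n', rfl⟩ := mem_squareLattice.1 hg
    simp only [AddSubgroup.vadd_def, vadd_eq_add, mem_prod, Prod.fst_add, Prod.snd_add,
      add_comm _ x.1, add_comm _ x.2] at hgx
    rw [Subtype.mk.injEq, hm_unique m' hgx.1, hn_unique n' hgx.2]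

theorem setIntegral_Icc_prod_Icc_eq_of_periodic (hT : 0 < T) {f : ℝ × ℝ → E}
    (h₁ : ∀ y, Periodic (fun x => f (x, y)) T) (h₂ : ∀ x, Periodic (fun y => f (x, y)) T)
    (a b c d : ℝ) :
    ∫ k in Icc a (a + T) ×ˢ Icc b (b + T), f k = ∫ k in Icc c (c + T) ×ˢ Icc d (d + T), f k := by
  have hIoc_ae_Icc (a b : ℝ) :
      Ioc a (a + T) ×ˢ Ioc b (b + T) =ᵐ[(volume : Measure (ℝ × ℝ))]
        Icc a (a + T) ×ˢ Icc b (b + T) := by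
    rw [Measure.volume_eq_prod]
    exact Measure.set_prod_ae_eq Ioc_ae_eq_Icc Ioc_ae_eq_Icc
  rw [← setIntegral_congr_set (hIoc_ae_Icc a b), ← setIntegral_congr_set (hIoc_ae_Icc c d)]
  refine (isAddFundamentalDomain_Ioc_prod_Ioc hT a b).setIntegral_eq
    (isAddFundamentalDomain_Ioc_prod_Ioc hT c d) fun ⟨g, hg⟩ x => ?_
  obtain ⟨m, n, rfl⟩ := mem_squareLattice.1 hg
  show f ((m • T, n • T) + x) = f x
  calc f ((m • T, n • T) + x) = f (x.1 + m • T, x.2 + n • T) := by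
        rw [Prod.mk_add_mk, add_comm _ x.1, add_comm _ x.2]
    _ = f (x.1, x.2 + n • T) := (h₁ _).zsmul m x.1
    _ = f x := (h₂ _).zsmul n x.2

theorem setIntegral_Icc_prod_Icc_comp_sub_left_of_periodic (hT : 0 < T) {f : ℝ × ℝ → E}
    (h₁ : ∀ y, Periodic (fun x => f (x, y)) T) (h₂ : ∀ x, Periodic (fun y => f (x, y)) T)
    (p : ℝ × ℝ) (a b : ℝ) :
    ∫ k in Icc a (a + T) ×ˢ Icc b (b + T), f (p - k)
      = ∫ k in Icc a (a + T) ×ˢ Icc b (b + T), f k := by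
  have hpre : (p - ·) ⁻¹'
      (Icc (p.1 - a - T) (p.1 - a - T + T) ×ˢ Icc (p.2 - b - T) (p.2 - b - T + T))
      = Icc a (a + T) ×ˢ Icc b (b + T) := by
    ext k
    simp only [mem_preimage, mem_prod, mem_Icc, Prod.fst_sub, Prod.snd_sub]
    constructor <;> rintro ⟨⟨_, _⟩, _, _⟩ <;> refine ⟨⟨?_, ?_⟩, ?_, ?_⟩ <;> linarith
  conv_lhs => rw [← hpre]
  rw [(Measure.measurePreserving_sub_left volume p).setIntegral_preimage_emb
    (Homeomorph.subLeft p).measurableEmbedding]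
  exact setIntegral_Icc_prod_Icc_eq_of_periodic hT h₁ h₂ _ _ _ _

end PeriodicIntegral

section Dimer

lemma periodic_cexp_I_mul : Periodic (fun x : ℝ => cexp (I * x)) (2 * π) := fun x => by
  show cexp (I * ↑(x + 2 * π)) = cexp (I * x)
  rw [ofReal_add, mul_add, Complex.exp_add, ofReal_mul, ofReal_ofNat, mul_comm I (2 * (π : ℂ)),
    exp_two_pi_mul_I, mul_one]

lemma cexp_I_mul_pi_sub (x : ℝ) : cexp (I * ↑(π - x)) = -conj (cexp (I * x)) := by
  rw [← exp_conj, map_mul, conj_I, conj_ofReal,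
    show I * ↑(π - x) = π * I + -I * x by push_cast; ring, Complex.exp_add, exp_pi_mul_I,
    neg_one_mul]

variable (t1 t2 t3 : ℝ)

noncomputable def muPoly (z w : ℂ) : ℂ := t1 + I * t2 * z - t3 * (z * w) - I * w

lemma mu_eq_muPoly (k : ℝ × ℝ) :
    mu t1 t2 t3 k = muPoly t1 t2 t3 (cexp (I * k.1)) (cexp (I * k.2)) := by
  rw [mu, muPoly, mul_add, Complex.exp_add]

lemma conj_muPoly (z w : ℂ) :
    conj (muPoly t1 t2 t3 z w) = muPoly t1 t2 t3 (-conj z) (-conj w) := by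
  simp only [muPoly, map_sub, map_add, map_mul, conj_ofReal, conj_I]
  ring

noncomputable def fourierIntegrand (a : ℤ × ℤ) (k : ℝ × ℝ) : ℂ :=
  cexp (I * ((k.1 : ℂ) * (a.1 : ℂ) + (k.2 : ℂ) * (a.2 : ℂ))) / mu t1 t2 t3 k

lemma fourierIntegrand_eq (a : ℤ × ℤ) (k : ℝ × ℝ) :
    fourierIntegrand t1 t2 t3 a k = cexp (I * k.1) ^ a.1 * cexp (I * k.2) ^ a.2
      / muPoly t1 t2 t3 (cexp (I * k.1)) (cexp (I * k.2)) := by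
  rw [fourierIntegrand, mu_eq_muPoly, ← exp_int_mul, ← exp_int_mul, ← Complex.exp_add]
  ring_nf

lemma fourierIntegrand_periodic_fst (a : ℤ × ℤ) (y : ℝ) :
    Periodic (fun x => fourierIntegrand t1 t2 t3 a (x, y)) (2 * π) := fun x => by
  simp only [fourierIntegrand_eq, periodic_cexp_I_mul x]

lemma fourierIntegrand_periodic_snd (a : ℤ × ℤ) (x : ℝ) :
    Periodic (fun y => fourierIntegrand t1 t2 t3 a (x, y)) (2 * π) := fun y => by
  simp only [fourierIntegrand_eq, periodic_cexp_I_mul y]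

lemma fourierIntegrand_pi_sub (a : ℤ × ℤ) (k : ℝ × ℝ) :
    fourierIntegrand t1 t2 t3 a ((π, π) - k)
      = (-1) ^ (a.1 + a.2) * conj (fourierIntegrand t1 t2 t3 a k) := by
  simp only [fourierIntegrand_eq, Prod.fst_sub, Prod.snd_sub, cexp_I_mul_pi_sub, conj_muPoly,
    map_div₀, map_mul, map_zpow₀, neg_eq_neg_one_mul (conj _), mul_zpow,
    zpow_add₀ (neg_ne_zero.2 one_ne_zero : (-1 : ℂ) ≠ 0)]
  ring

lemma conj_gcoef (a : ℤ × ℤ) :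
    conj (gcoef t1 t2 t3 a) = (-1) ^ (a.1 + a.2) * gcoef t1 t2 t3 a := by
  have hbox : Icc (-π) π = Icc (-π) (-π + 2 * π) := by ring_nf
  have hreflect : gcoef t1 t2 t3 a = (-1) ^ (a.1 + a.2) * conj (gcoef t1 t2 t3 a) := calc
    gcoef t1 t2 t3 a
        = (((2 * π) ^ 2 : ℝ) : ℂ)⁻¹ * ∫ k in Icc (-π) π ×ˢ Icc (-π) π,
            fourierIntegrand t1 t2 t3 a ((π, π) - k) := by
          rw [hbox, setIntegral_Icc_prod_Icc_comp_sub_left_of_periodic two_pi_pos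
            (fourierIntegrand_periodic_fst t1 t2 t3 a) (fourierIntegrand_periodic_snd t1 t2 t3 a),
            ← hbox]
          rfl
    _ = (((2 * π) ^ 2 : ℝ) : ℂ)⁻¹ * ∫ k in Icc (-π) π ×ˢ Icc (-π) π,
            (-1) ^ (a.1 + a.2) * conj (fourierIntegrand t1 t2 t3 a k) := by
          simp_rw [fourierIntegrand_pi_sub]
    _ = (-1) ^ (a.1 + a.2) * conj ((((2 * π) ^ 2 : ℝ) : ℂ)⁻¹ * ∫ k in Icc (-π) π ×ˢ Icc (-π) π,
            fourierIntegrand t1 t2 t3 a k) := by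
          rw [integral_const_mul, integral_conj, map_mul, map_inv₀, conj_ofReal]
          ring
    _ = (-1) ^ (a.1 + a.2) * conj (gcoef t1 t2 t3 a) := rfl
  conv_lhs => rw [hreflect]
  rw [map_mul, map_zpow₀, map_neg, map_one, conj_conj]

lemma Wfun_eq (k : ℝ × ℝ) :
    Wfun t1 t2 t3 k = gcoef t1 t2 t3 (0, 0) * (cexp (I * k.1) * cexp (I * k.2))
      - gcoef t1 t2 t3 (1, 0) * cexp (I * k.2) - gcoef t1 t2 t3 (0, 1) * cexp (I * k.1)
      + gcoef t1 t2 t3 (1, 1) := by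
  rw [Wfun, mul_add, Complex.exp_add]

end Dimer

theorem Wfun_conj_symmetry_general (t1 t2 t3 : ℝ) :
    (∀ p : ℝ × ℝ, conj (Wfun t1 t2 t3 p) = Wfun t1 t2 t3 (π - p.1, π - p.2)) ∧
    (∀ pplus : ℝ × ℝ, mu t1 t2 t3 pplus = 0 →
      conj (Wfun t1 t2 t3 pplus) = Wfun t1 t2 t3 (π - pplus.1, π - pplus.2)) := by
  have hsymm (p : ℝ × ℝ) : conj (Wfun t1 t2 t3 p) = Wfun t1 t2 t3 (π - p.1, π - p.2) := by
    rw [Wfun_eq, Wfun_eq, cexp_I_mul_pi_sub, cexp_I_mul_pi_sub]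
    simp only [map_add, map_sub, map_mul, conj_gcoef]
    norm_num
  exact ⟨hsymm, fun p _ => hsymm p⟩

/-- `conj (W(p)) = W((π,π) − p)`; in particular `conj (W(p⁺)) = W(p⁻)` for a zero `p⁺` of `μ`
and `p⁻ = (π,π) − p⁺`. -/
theorem Wfun_conj_symmetry (t1 t2 t3 : ℝ) (ht1 : 0 < t1) (ht2 : 0 < t2) (ht3 : 0 < t3)
    (hint : IntegrableOn (fun k : ℝ × ℝ => (mu t1 t2 t3 k)⁻¹)
      (Set.Icc (-π) π ×ˢ Set.Icc (-π) π)) :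
    (∀ p : ℝ × ℝ, conj (Wfun t1 t2 t3 p) = Wfun t1 t2 t3 (π - p.1, π - p.2)) ∧
    (∀ pplus : ℝ × ℝ, mu t1 t2 t3 pplus = 0 →
      conj (Wfun t1 t2 t3 pplus) = Wfun t1 t2 t3 (π - pplus.1, π - pplus.2)) :=
  Wfun_conj_symmetry_general t1 t2 t3
end

section
/- Assume t1 ≠ t2 and that k ↦ 1/μ(k) is Lebesgue integrable on [−π,π]². Then the following two residue-theorem identities hold: (2π)^{−2} ∫_{[−π,π]²} 1/μ(k) dk = (2π)^{−1} ∫_{−π}^{π} 1{|A(θ)| > |B(θ)|} / A(θ) dθ, and (2π)^{−2} ∫_{[−π,π]²} exp(i k1)/μ(k) dk = (2π)^{−1} ∫_{−π}^{π} exp(iθ) · 1{|A(θ)| > |B(θ)|} / A(θ) dθ, where 1{·} denotes the indicator function. (Note that |A(θ)|² = t1² + t2² − 2 t1 t2 sin θ ≥ (t1−t2)² > 0, so the right-hand integrands are bounded.) -/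
open Complex Real MeasureTheory

/-- `A(θ) = t₁ + i t₂ e^{iθ}`. -/
noncomputable def Afun (t1 t2 : ℝ) (θ : ℝ) : ℂ :=
  (t1 : ℂ) + Complex.I * (t2 : ℂ) * Complex.exp (Complex.I * (θ : ℂ))

/-- `B(θ) = i + t₃ e^{iθ}`. -/
noncomputable def Bfun (t3 : ℝ) (θ : ℝ) : ℂ :=
  Complex.I + (t3 : ℂ) * Complex.exp (Complex.I * (θ : ℂ))

/-! Writing `μ(k) = A(k₁) - B(k₁) e^{i k₂}`, the inner `k₂`-integral is `2π` times the average of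
`z ↦ (A - B z)⁻¹` over the unit circle. For `|B| < |A|` this function is holomorphic on the closed
unit disc, so the mean value property gives `A⁻¹`; for `|A| < |B|` the same applies after the
substitution `z ↦ z⁻¹`, which yields a holomorphic function vanishing at `0`. As `|A(θ)|² - |B(θ)|²`
is affine in `sin θ` with nonzero slope, `|A(θ)| = |B(θ)|` only on a null set, and Fubini concludes. -/

open Set Metric

theorem Complex.sub_mul_ne_zero_of_norm_lt {a b z : ℂ} (hab : ‖b‖ < ‖a‖) (hz : ‖z‖ ≤ 1) :
    a - b * z ≠ 0 := by
  rw [sub_ne_zero]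
  rintro rfl
  have : ‖b * z‖ ≤ ‖b‖ := by
    rw [norm_mul]; exact mul_le_of_le_one_right (norm_nonneg b) hz
  exact this.not_gt hab

theorem Complex.differentiableOn_inv_sub_mul {a b : ℂ} (hab : ‖b‖ < ‖a‖) :
    DifferentiableOn ℂ (fun z => (a - b * z)⁻¹) (closedBall 0 1) :=
  ((differentiableOn_const a).sub ((differentiableOn_const b).mul differentiableOn_id)).inv
    fun z hz => sub_mul_ne_zero_of_norm_lt hab (by simpa using hz)

theorem DifferentiableOn.circleAverage_zero_one {E : Type*} [NormedAddCommGroup E]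
    [NormedSpace ℂ E] [CompleteSpace E] {f : ℂ → E} (hf : DifferentiableOn ℂ f (closedBall 0 1)) :
    circleAverage f 0 1 = f 0 := by
  have hf' : DiffContOnCl ℂ f (ball 0 |1|) := by
    rw [abs_one]; exact (hf.mono closure_ball_subset_closedBall).diffContOnCl
  simpa using hf'.circleAverage

theorem circleAverage_inv_sub_mul_of_norm_lt {a b : ℂ} (hab : ‖b‖ < ‖a‖) :
    circleAverage (fun z => (a - b * z)⁻¹) 0 1 = a⁻¹ := by
  simpa using (differentiableOn_inv_sub_mul hab).circleAverage_zero_one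

theorem circleAverage_inv_sub_mul_of_norm_gt {a b : ℂ} (hab : ‖a‖ < ‖b‖) :
    circleAverage (fun z => (a - b * z)⁻¹) 0 1 = 0 := by
  rw [← circleAverage_zero_one_congr_inv (f := fun z => (a - b * z)⁻¹)]
  -- `(a - b * z⁻¹)⁻¹` is the junk value `a⁻¹` at `z = 0`; replace it on the circle.
  have hsphere : EqOn (fun z => (a - b * z⁻¹)⁻¹) (fun z => -z * (b - a * z)⁻¹) (sphere 0 |1|) := by
    intro z hz
    have hz0 : z ≠ 0 := by rintro rfl; simp at hz
    have hne : b - a * z ≠ 0 := sub_mul_ne_zero_of_norm_lt hab (by simp_all)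
    field_simp
    rw [← neg_sub (a * z) b, neg_div_self (sub_ne_zero.mpr (sub_ne_zero.mp hne).symm)]
  have hdiff : DifferentiableOn ℂ (fun z => -z * (b - a * z)⁻¹) (closedBall 0 1) :=
    differentiableOn_id.neg.mul (differentiableOn_inv_sub_mul hab)
  rw [circleAverage_congr_sphere hsphere, hdiff.circleAverage_zero_one]
  simp

theorem intervalIntegral_comp_exp_eq_circleAverage {E : Type*} [NormedAddCommGroup E]
    [NormedSpace ℂ E] (f : ℂ → E) :
    ∫ θ in (-π)..π, f (exp (I * θ)) = (2 * π) • circleAverage f 0 1 := by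
  rw [circleAverage_eq_integral_add (-π),
    intervalIntegral.integral_comp_add_right (fun θ => f (circleMap 0 1 θ)), smul_smul, mul_inv_cancel₀ (by positivity), one_smul, show 2 * π + -π = π by ring]
  simp only [circleMap_zero, ofReal_one, one_mul, zero_add, mul_comm _ I]

theorem integral_inv_sub_mul_exp {a b : ℂ} (hab : ‖a‖ ≠ ‖b‖) :
    ∫ θ in (-π)..π, (a - b * exp (I * θ))⁻¹ = 2 * π * if ‖b‖ < ‖a‖ then a⁻¹ else 0 := by
  rw [intervalIntegral_comp_exp_eq_circleAverage (fun z => (a - b * z)⁻¹), real_smul]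
  split_ifs with h
  · rw [circleAverage_inv_sub_mul_of_norm_lt h]; push_cast; ring
  · rw [circleAverage_inv_sub_mul_of_norm_gt ((not_lt.mp h).lt_of_ne hab), mul_zero, mul_zero]

theorem setIntegral_Icc_prod_mul_inv_sub_mul_exp {φ A B : ℝ → ℂ}
    (hAB : ∀ᵐ θ, ‖A θ‖ ≠ ‖B θ‖)
    (hint : IntegrableOn (fun k : ℝ × ℝ => φ k.1 * (A k.1 - B k.1 * exp (I * k.2))⁻¹)
      (Icc (-π) π ×ˢ Icc (-π) π)) :
    ∫ k in Icc (-π) π ×ˢ Icc (-π) π, φ k.1 * (A k.1 - B k.1 * exp (I * k.2))⁻¹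
      = 2 * π * ∫ θ in (-π)..π, φ θ * if ‖B θ‖ < ‖A θ‖ then (A θ)⁻¹ else 0 := by
  have hle : -π ≤ π := by linarith [pi_pos]
  rw [Measure.volume_eq_prod] at hint ⊢
  rw [setIntegral_prod _ hint, intervalIntegral.integral_of_le hle, ← integral_Icc_eq_integral_Ioc,
    ← integral_const_mul]
  refine setIntegral_congr_ae measurableSet_Icc (hAB.mono fun θ hθ _ => ?_)
  dsimp only
  rw [integral_const_mul, integral_Icc_eq_integral_Ioc, ← intervalIntegral.integral_of_le hle,
    integral_inv_sub_mul_exp hθ]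
  ring

theorem Real.countable_setOf_sin_eq (c : ℝ) : {x : ℝ | Real.sin x = c}.Countable := by
  refine (countable_iUnion fun k : ℤ =>
    (toFinite {2 * k * π + arcsin c, (2 * k + 1) * π - arcsin c}).countable).mono ?_
  rintro x (rfl : Real.sin x = _)
  obtain ⟨k, hk⟩ := sin_eq_sin_iff.mp (sin_arcsin (neg_one_le_sin x) (sin_le_one x))
  exact mem_iUnion.mpr ⟨k, by rcases hk with h | h <;> simp [← h]⟩

theorem norm_Afun_sq (t1 t2 θ : ℝ) :
    ‖Afun t1 t2 θ‖ ^ 2 = t1 ^ 2 + t2 ^ 2 - 2 * t1 * t2 * Real.sin θ := by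
  rw [Complex.sq_norm, Afun]
  simp [Complex.normSq_apply, Complex.exp_re, Complex.exp_im]
  linear_combination t2 ^ 2 * Real.sin_sq_add_cos_sq θ

theorem norm_Bfun_sq (t3 θ : ℝ) :
    ‖Bfun t3 θ‖ ^ 2 = 1 + t3 ^ 2 + 2 * t3 * Real.sin θ := by
  rw [Complex.sq_norm, Bfun]
  simp [Complex.normSq_apply, Complex.exp_re, Complex.exp_im]
  linear_combination t3 ^ 2 * Real.sin_sq_add_cos_sq θ

theorem ae_norm_Afun_ne_norm_Bfun {t1 t2 t3 : ℝ} (ht1 : 0 < t1) (ht2 : 0 < t2) (ht3 : 0 < t3) :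
    ∀ᵐ θ, ‖Afun t1 t2 θ‖ ≠ ‖Bfun t3 θ‖ := by
  have hden : 0 < 2 * (t1 * t2 + t3) := by positivity
  filter_upwards [(countable_setOf_sin_eq
    ((t1 ^ 2 + t2 ^ 2 - 1 - t3 ^ 2) / (2 * (t1 * t2 + t3)))).ae_notMem volume] with θ hθ heq
  have hsq := congrArg (· ^ 2) heq
  simp only [norm_Afun_sq, norm_Bfun_sq] at hsq
  exact hθ (by rw [eq_div_iff hden.ne']; linarith)

theorem mu_eq_Afun_sub_Bfun_mul_exp (t1 t2 t3 : ℝ) (k : ℝ × ℝ) :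
    mu t1 t2 t3 k = Afun t1 t2 k.1 - Bfun t3 k.1 * exp (I * k.2) := by
  rw [mu, Afun, Bfun, mul_add, Complex.exp_add]
  ring

theorem setIntegral_mul_inv_mu {t1 t2 t3 : ℝ} (ht1 : 0 < t1) (ht2 : 0 < t2) (ht3 : 0 < t3)
    {φ : ℝ → ℂ} (hφ : Continuous φ) {C : ℝ} (hφC : ∀ θ, ‖φ θ‖ ≤ C)
    (hint : IntegrableOn (fun k : ℝ × ℝ => (mu t1 t2 t3 k)⁻¹) (Icc (-π) π ×ˢ Icc (-π) π)) :
    ∫ k in Icc (-π) π ×ˢ Icc (-π) π, φ k.1 * (mu t1 t2 t3 k)⁻¹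
      = 2 * π * ∫ θ in (-π)..π,
          φ θ * if ‖Bfun t3 θ‖ < ‖Afun t1 t2 θ‖ then (Afun t1 t2 θ)⁻¹ else 0 := by
  have hint' := hint.bdd_mul (hφ.comp continuous_fst).aestronglyMeasurable
    (Filter.Eventually.of_forall fun k => hφC k.1)
  simp only [mu_eq_Afun_sub_Bfun_mul_exp] at hint' ⊢
  exact setIntegral_Icc_prod_mul_inv_sub_mul_exp (ae_norm_Afun_ne_norm_Bfun ht1 ht2 ht3) hint'

theorem residue_identities_A_general (t1 t2 t3 : ℝ) (ht1 : 0 < t1) (ht2 : 0 < t2) (ht3 : 0 < t3)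
    (hint : IntegrableOn (fun k : ℝ × ℝ => (mu t1 t2 t3 k)⁻¹)
      (Set.Icc (-π) π ×ˢ Set.Icc (-π) π)) :
    (((2 * π) ^ 2 : ℝ) : ℂ)⁻¹ *
        (∫ k in Set.Icc (-π) π ×ˢ Set.Icc (-π) π, (mu t1 t2 t3 k)⁻¹)
      = ((2 * π : ℝ) : ℂ)⁻¹ *
        ∫ θ in (-π)..π,
          (if ‖Bfun t3 θ‖ < ‖Afun t1 t2 θ‖
            then (Afun t1 t2 θ)⁻¹ else 0) ∧
    (((2 * π) ^ 2 : ℝ) : ℂ)⁻¹ *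
        (∫ k in Set.Icc (-π) π ×ˢ Set.Icc (-π) π,
          Complex.exp (Complex.I * (k.1 : ℂ)) / mu t1 t2 t3 k)
      = ((2 * π : ℝ) : ℂ)⁻¹ *
        ∫ θ in (-π)..π,
          (if ‖Bfun t3 θ‖ < ‖Afun t1 t2 θ‖
            then Complex.exp (Complex.I * (θ : ℂ)) * (Afun t1 t2 θ)⁻¹ else 0) := by
  have hone := setIntegral_mul_inv_mu ht1 ht2 ht3 continuous_const (fun _ => le_refl ‖(1 : ℂ)‖)
    hint
  have hexp := setIntegral_mul_inv_mu ht1 ht2 ht3 (φ := fun θ : ℝ => exp (I * θ)) (by fun_prop)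
    (fun θ => (norm_exp_I_mul_ofReal θ).le) hint
  simp only [one_mul] at hone
  simp only [div_eq_mul_inv, mul_ite, mul_zero] at hexp ⊢
  rw [hone, hexp]
  have hπ : (π : ℂ) ≠ 0 := ofReal_ne_zero.mpr pi_ne_zero
  push_cast
  constructor <;> field_simp

/-- Residue-theorem identities:
`(2π)⁻² ∫_{[−π,π]²} e^{i k₁ a₁}/μ(k) dk = (2π)⁻¹ ∫_{−π}^{π} 1{|A|>|B|}/A dθ` for `a₁ = 0, 1`. -/
theorem residue_identities_A (t1 t2 t3 : ℝ) (ht1 : 0 < t1) (ht2 : 0 < t2) (ht3 : 0 < t3)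
    (h12 : t1 ≠ t2)
    (hint : IntegrableOn (fun k : ℝ × ℝ => (mu t1 t2 t3 k)⁻¹)
      (Set.Icc (-π) π ×ˢ Set.Icc (-π) π)) :
    (((2 * π) ^ 2 : ℝ) : ℂ)⁻¹ *
        (∫ k in Set.Icc (-π) π ×ˢ Set.Icc (-π) π, (mu t1 t2 t3 k)⁻¹)
      = ((2 * π : ℝ) : ℂ)⁻¹ *
        ∫ θ in (-π)..π,
          (if ‖Bfun t3 θ‖ < ‖Afun t1 t2 θ‖
            then (Afun t1 t2 θ)⁻¹ else 0) ∧
    (((2 * π) ^ 2 : ℝ) : ℂ)⁻¹ *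
        (∫ k in Set.Icc (-π) π ×ˢ Set.Icc (-π) π,
          Complex.exp (Complex.I * (k.1 : ℂ)) / mu t1 t2 t3 k)
      = ((2 * π : ℝ) : ℂ)⁻¹ *
        ∫ θ in (-π)..π,
          (if ‖Bfun t3 θ‖ < ‖Afun t1 t2 θ‖
            then Complex.exp (Complex.I * (θ : ℂ)) * (Afun t1 t2 θ)⁻¹ else 0) :=
  residue_identities_A_general t1 t2 t3 ht1 ht2 ht3 hint
end
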